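/- arXiv:2006.08135 — 3 statements merged into one kernel-verified Lean document; each statement's English description precedes it below -/
import Mathlib

section
/- With α_k = (1+γ)^k / ((1+γ)^{k+1} - γ^{k+1}) and α = 1/(1+γ), the sequence satisfies the strict contraction estimate |α_k - α| < (γ/(1+γ)) |α_{k-1} - α| for all k ≥ 1, hence α_k → α linearly with rate γ/(1+γ). -/
theorem stmt_7 (γ : ℝ) (hγ : 0 < γ)
    (α : ℕ → ℝ) (hα : ∀ k, α k = (1 + γ) ^ k / ((1 + γ) ^ (k + 1) - γ ^ (k + 1))) :
    (∀ k : ℕ, 1 ≤ k →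
        |α k - 1 / (1 + γ)| < (γ / (1 + γ)) * |α (k - 1) - 1 / (1 + γ)|) ∧
    (∀ k : ℕ, |α k - 1 / (1 + γ)| ≤ (γ / (1 + γ)) ^ k * |α 0 - 1 / (1 + γ)|) ∧
    Filter.Tendsto α Filter.atTop (nhds (1 / (1 + γ))) := by
  have h1γ : (0:ℝ) < 1 + γ := by linarith
  have hd : ∀ k : ℕ, 0 < (1 + γ) ^ (k + 1) - γ ^ (k + 1) := by
    intro k
    have : γ ^ (k + 1) < (1 + γ) ^ (k + 1) :=
      pow_lt_pow_left₀ (show γ < 1 + γ by linarith) hγ.le (Nat.succ_ne_zero k)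
    linarith
  have key : ∀ k : ℕ, α k - 1 / (1 + γ)
      = γ ^ (k + 1) / ((1 + γ) * ((1 + γ) ^ (k + 1) - γ ^ (k + 1))) := by
    intro k
    rw [hα k]
    have h1 : (1 + γ) ^ (k + 1) - γ ^ (k + 1) ≠ 0 := (hd k).ne'
    field_simp
    ring
  have keyabs : ∀ k : ℕ, |α k - 1 / (1 + γ)|
      = γ ^ (k + 1) / ((1 + γ) * ((1 + γ) ^ (k + 1) - γ ^ (k + 1))) := by
    intro k
    rw [key k, abs_of_pos]
    exact div_pos (pow_pos hγ _) (mul_pos h1γ (hd k))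
  have hstrict : ∀ k : ℕ, 1 ≤ k →
      |α k - 1 / (1 + γ)| < (γ / (1 + γ)) * |α (k - 1) - 1 / (1 + γ)| := by
    rintro k hk
    obtain ⟨m, rfl⟩ := Nat.exists_eq_add_of_le hk
    simp only [Nat.add_sub_cancel_left] at *
    rw [keyabs, keyabs]
    have hdm := hd m
    have hdm1 := hd (1 + m)
    rw [div_mul_div_comm]
    have hnum : γ * γ ^ (m + 1) = γ ^ (1 + m + 1) := by ring
    rw [hnum]
    apply div_lt_div_of_pos_left (pow_pos hγ _)
    · positivity
    · have e1 : (1 + γ) ^ (1 + m + 1) = (1 + γ) * (1 + γ) ^ (m + 1) := by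
        rw [show 1 + m + 1 = (m + 1) + 1 by ring, pow_succ]; ring
      have e2 : γ ^ (1 + m + 1) = γ * γ ^ (m + 1) := by
        rw [show 1 + m + 1 = (m + 1) + 1 by ring, pow_succ]; ring
      rw [e1, e2]
      nlinarith [pow_pos hγ (m+1), pow_pos h1γ (m+1)]
  have hr0 : 0 < γ / (1 + γ) := div_pos hγ h1γ
  have hgeom : ∀ k : ℕ, |α k - 1 / (1 + γ)| ≤ (γ / (1 + γ)) ^ k * |α 0 - 1 / (1 + γ)| := by
    intro k
    induction k with
    | zero => simp
    | succ n ih =>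
      have h1 := hstrict (n + 1) (Nat.le_add_left 1 n)
      simp only [Nat.add_sub_cancel] at h1
      calc |α (n + 1) - 1 / (1 + γ)| ≤ (γ / (1 + γ)) * |α n - 1 / (1 + γ)| := h1.le
        _ ≤ (γ / (1 + γ)) * ((γ / (1 + γ)) ^ n * |α 0 - 1 / (1 + γ)|) := by
            exact mul_le_mul_of_nonneg_left ih hr0.le
        _ = (γ / (1 + γ)) ^ (n + 1) * |α 0 - 1 / (1 + γ)| := by ring
  refine ⟨hstrict, hgeom, ?_⟩
  have hr1 : γ / (1 + γ) < 1 := (div_lt_one h1γ).mpr (by linarith)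
  have h0 : Filter.Tendsto (fun k => (γ / (1 + γ)) ^ k * |α 0 - 1 / (1 + γ)|)
      Filter.atTop (nhds 0) := by
    have := (tendsto_pow_atTop_nhds_zero_of_lt_one hr0.le hr1).mul_const
      |α 0 - 1 / (1 + γ)|
    simpa using this
  have : Filter.Tendsto (fun k => α k - 1 / (1 + γ)) Filter.atTop (nhds 0) :=
    squeeze_zero_norm (fun n => by simpa using hgeom n) h0
  have := this.add_const (1 / (1 + γ))
  simpa using this
end

section
/- Main convergence theorem: with P column-stochastic, γ > 0, p₀ a probability vector, p* = (1/(1+γ)) ∑_{m=0}^∞ (γ/(1+γ))^m P^m p₀, and the normalized iterate p^{(k)} = ((1+γ)^k / ((1+γ)^{k+1} - γ^{k+1})) ∑_{m=0}^k (γ/(1+γ))^m P^m p₀, one has ‖p^{(k)} - p*‖ ≤ c (γ/(1+γ))^k for all k ∈ ℕ, where c = ‖(1/(1+γ)) p₀ - p*‖ + γ ‖p*‖; in particular p^{(k)} → p* as k → ∞. -/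
theorem stmt_9 {n : ℕ} (γ : ℝ) (hγ : 0 < γ) (P : Matrix (Fin n) (Fin n) ℝ)
    (hPnorm : ∀ v : Fin n → ℝ, ‖P.mulVec v‖ ≤ ‖v‖)
    (hPstoch : ∀ v : Fin n → ℝ, ∑ i, P.mulVec v i = ∑ i, v i)
    (p₀ : Fin n → ℝ) (hp₀pos : ∀ i, 0 ≤ p₀ i) (hp₀sum : ∑ i, p₀ i = 1)
    (pstar : Fin n → ℝ)
    (hstar : pstar = (1 / (1 + γ)) • ∑' m : ℕ, (γ / (1 + γ)) ^ m • (P ^ m).mulVec p₀)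
    (pk : ℕ → Fin n → ℝ)
    (hpk : ∀ k, pk k = ((1 + γ) ^ k / ((1 + γ) ^ (k + 1) - γ ^ (k + 1))) •
        ∑ m ∈ Finset.range (k + 1), (γ / (1 + γ)) ^ m • (P ^ m).mulVec p₀) :
    (∀ k : ℕ, ‖pk k - pstar‖ ≤
        (‖(1 / (1 + γ)) • p₀ - pstar‖ + γ * ‖pstar‖) * (γ / (1 + γ)) ^ k) ∧
    Filter.Tendsto pk Filter.atTop (nhds pstar) := by
  have hn : n ≠ 0 := by rintro rfl; simp at hp₀sum
  have hne : Nonempty (Fin n) := Fin.pos_iff_nonempty.mp (Nat.pos_of_ne_zero hn)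
  have h1γ : (0:ℝ) < 1 + γ := by linarith
  set β : ℝ := γ / (1 + γ) with hβ
  have hβ0 : 0 ≤ β := div_nonneg hγ.le h1γ.le
  have hβ1 : β < 1 := (div_lt_one h1γ).mpr (by linarith)
  -- powers of P are norm-nonexpansive
  have hPm : ∀ (m : ℕ) (v : Fin n → ℝ), ‖(P ^ m).mulVec v‖ ≤ ‖v‖ := by
    intro m
    induction m with
    | zero => intro v; simp [Matrix.mulVec_one]
    | succ m ih =>
      intro v
      have : (P ^ (m+1)).mulVec v = (P ^ m).mulVec (P.mulVec v) := by
        rw [Matrix.mulVec_mulVec, ← pow_succ]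
      rw [this]
      exact (ih _).trans (hPnorm v)
  -- P is entrywise nonnegative
  have hPpos : ∀ i j, 0 ≤ P i j := by
    have hcol : ∀ j, ∑ i, P i j = 1 := by
      intro j
      have := hPstoch (Pi.single j 1)
      simpa [Matrix.mulVec_single] using this
    have hrow : ∀ i, ∑ j, |P i j| ≤ 1 := by
      intro i
      set v : Fin n → ℝ := fun j => if P i j < 0 then (-1:ℝ) else 1 with hv
      have hvnorm : ‖v‖ ≤ 1 := by
        rw [pi_norm_le_iff_of_nonneg zero_le_one]
        intro j
        by_cases h : P i j < 0 <;> simp [hv, h]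
      have h1 : P.mulVec v i = ∑ j, |P i j| := by
        simp only [Matrix.mulVec, dotProduct, hv]
        refine Finset.sum_congr rfl fun j _ => ?_
        by_cases h : P i j < 0
        · simp [h, abs_of_neg h]
        · simp [h, abs_of_nonneg (not_lt.mp h)]
      calc ∑ j, |P i j| = P.mulVec v i := h1.symm
        _ ≤ |P.mulVec v i| := le_abs_self _
        _ ≤ ‖P.mulVec v‖ := by simpa using norm_le_pi_norm (P.mulVec v) i
        _ ≤ ‖v‖ := hPnorm v
        _ ≤ 1 := hvnorm
    -- total sum argument
    have htot : ∑ i, ∑ j, (|P i j| - P i j) ≤ 0 := by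
      have h1 : ∑ i : Fin n, ∑ j, |P i j| ≤ (n : ℝ) := by
        calc ∑ i : Fin n, ∑ j, |P i j| ≤ ∑ i : Fin n, (1:ℝ) :=
              Finset.sum_le_sum fun i _ => hrow i
          _ = n := by simp
      have h2 : ∑ i : Fin n, ∑ j, P i j = (n : ℝ) := by
        rw [Finset.sum_comm (f := fun i j => P i j)]
        simp [hcol]
      simp only [Finset.sum_sub_distrib]
      linarith
    intro i j
    have hz : ∀ i ∈ Finset.univ, ∀ j ∈ Finset.univ, (0:ℝ) ≤ |P i j| - P i j :=
      fun i _ j _ => by linarith [le_abs_self (P i j)]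
    have := (Finset.sum_eq_zero_iff_of_nonneg (fun i _ =>
      Finset.sum_nonneg (fun j _ => hz i (Finset.mem_univ i) j (Finset.mem_univ j)))).mp
      (le_antisymm htot (Finset.sum_nonneg (fun i _ =>
        Finset.sum_nonneg (fun j _ => hz i (Finset.mem_univ i) j (Finset.mem_univ j)))))
    have := (Finset.sum_eq_zero_iff_of_nonneg (fun j _ =>
      hz i (Finset.mem_univ i) j (Finset.mem_univ j))).mp (this i (Finset.mem_univ i)) j
      (Finset.mem_univ j)
    have habs : |P i j| = P i j := by linarith
    linarith [abs_nonneg (P i j)]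
  -- powers of P entrywise nonneg
  have hPmpos : ∀ (m : ℕ) i j, 0 ≤ (P ^ m) i j := by
    intro m
    induction m with
    | zero => intro i j; by_cases h : i = j <;> simp [pow_zero, Matrix.one_apply, h]
    | succ m ih =>
      intro i j
      rw [pow_succ, Matrix.mul_apply]
      exact Finset.sum_nonneg fun l _ => mul_nonneg (ih i l) (hPpos l j)
  -- the series terms
  set a : ℕ → Fin n → ℝ := fun m => β ^ m • (P ^ m).mulVec p₀ with ha
  have hp₀n : ‖p₀‖ ≤ 1 := by
    rw [pi_norm_le_iff_of_nonneg zero_le_one]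
    intro i
    rw [Real.norm_eq_abs, abs_of_nonneg (hp₀pos i)]
    calc p₀ i ≤ ∑ j, p₀ j := Finset.single_le_sum (fun j _ => hp₀pos j) (Finset.mem_univ i)
      _ = 1 := hp₀sum
  have hsum : Summable a := by
    apply Summable.of_norm
    have : ∀ m, ‖a m‖ ≤ β ^ m := by
      intro m
      rw [ha]
      simp only [norm_smul, Real.norm_eq_abs, abs_pow, abs_of_nonneg hβ0]
      calc β ^ m * ‖(P ^ m).mulVec p₀‖ ≤ β ^ m * 1 := by
            exact mul_le_mul_of_nonneg_left ((hPm m p₀).trans hp₀n) (pow_nonneg hβ0 m)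
        _ = β ^ m := mul_one _
    exact Summable.of_nonneg_of_le (fun m => norm_nonneg _) this (summable_geometric_of_lt_one hβ0 hβ1)
  set t : Fin n → ℝ := ∑' m, a m with ht
  have hstar' : pstar = (1 / (1 + γ)) • t := hstar
  -- pstar entrywise nonneg
  have hanneg : ∀ m i, 0 ≤ a m i := by
    intro m i
    rw [ha]
    simp only [Pi.smul_apply, smul_eq_mul, Matrix.mulVec, dotProduct]
    exact mul_nonneg (pow_nonneg hβ0 m)
      (Finset.sum_nonneg fun j _ => mul_nonneg (hPmpos m i j) (hp₀pos j))
  have htneg : ∀ i, 0 ≤ t i := by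
    intro i
    rw [ht, tsum_apply hsum]
    exact tsum_nonneg fun m => hanneg m i
  have hstarpos : ∀ i, 0 ≤ pstar i := by
    intro i
    rw [hstar']
    exact mul_nonneg (by positivity) (htneg i)
  -- tail identity
  have htail : ∀ k : ℕ, t = (∑ m ∈ Finset.range (k+1), a m) + β^(k+1) • (P^(k+1)).mulVec t := by
    intro k
    have h1 := Summable.sum_add_tsum_nat_add (f := a) (k+1) hsum
    set L : (Fin n → ℝ) →L[ℝ] (Fin n → ℝ) :=
      LinearMap.toContinuousLinearMap ((P^(k+1)).mulVecLin) with hL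
    have hLa : ∀ v, L v = (P^(k+1)).mulVec v := fun v => rfl
    have h2 : ∀ j, a (j + (k+1)) = β^(k+1) • L (a j) := by
      intro j
      rw [ha]
      simp only [hLa]
      rw [Matrix.mulVec_smul, Matrix.mulVec_mulVec, ← pow_add]
      rw [smul_smul, ← pow_add]
      ring_nf
    have h3 : ∑' j, a (j + (k+1)) = β^(k+1) • (P^(k+1)).mulVec t := by
      calc ∑' j, a (j + (k+1)) = ∑' j, β^(k+1) • L (a j) := by simp_rw [h2]
        _ = β^(k+1) • ∑' j, L (a j) := Summable.tsum_const_smul _ ?_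
        _ = β^(k+1) • L t := by rw [← L.map_tsum hsum, ht]
        _ = β^(k+1) • (P^(k+1)).mulVec t := by rw [hLa]
      · exact (hsum.map L.toLinearMap L.continuous).congr (fun j => rfl)
    conv_lhs => rw [ht]
    rw [← h1, h3]
  -- key exact formula
  have hkey : ∀ k : ℕ, pk k - pstar =
      (β^(k+1) / (1 - β^(k+1))) • (pstar - (P^(k+1)).mulVec pstar) := by
    intro k
    have hβk1 : β^(k+1) < 1 := pow_lt_one₀ hβ0 hβ1 (Nat.succ_ne_zero k)
    have hd : (0:ℝ) < 1 - β^(k+1) := by linarith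
    have hγk : γ^(k+1) < (1+γ)^(k+1) := pow_lt_pow_left₀ (by linarith) hγ.le (Nat.succ_ne_zero k)
    have hd2 : (0:ℝ) < (1+γ)^(k+1) - γ^(k+1) := by linarith
    have hc : (1 + γ) ^ k / ((1 + γ) ^ (k + 1) - γ ^ (k + 1))
        = 1 / ((1+γ) * (1 - β^(k+1))) := by
      rw [hβ, div_pow]
      rw [div_eq_div_iff (by positivity) (by
        apply mul_ne_zero h1γ.ne'
        have : γ^(k+1)/(1+γ)^(k+1) < 1 := (div_lt_one (by positivity)).mpr hγk
        intro h; rw [sub_eq_zero] at h; rw [← h] at this; linarith)]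
      field_simp
      ring
    have hS : (∑ m ∈ Finset.range (k+1), a m) = t - β^(k+1) • (P^(k+1)).mulVec t :=
      eq_sub_of_add_eq (htail k).symm
    rw [hpk k, hstar', hc, hS, Matrix.mulVec_smul]
    match_scalars <;> field_simp <;> ring
  -- the bound
  have hβpos : 0 < β := div_pos hγ h1γ
  have h1β : 1 - β = 1/(1+γ) := by rw [hβ]; field_simp; ring
  have hbound : ∀ k : ℕ, ‖pk k - pstar‖ ≤
      (‖(1 / (1 + γ)) • p₀ - pstar‖ + γ * ‖pstar‖) * β ^ k := by
    intro k
    have hβk1 : β^(k+1) < 1 := pow_lt_one₀ hβ0 hβ1 (Nat.succ_ne_zero k)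
    have hd : (0:ℝ) < 1 - β^(k+1) := by linarith
    set q : Fin n → ℝ := (P^(k+1)).mulVec pstar with hqdef
    have hqpos : ∀ i, 0 ≤ q i := by
      intro i
      show 0 ≤ (P ^ (k + 1)).mulVec pstar i
      simp only [Matrix.mulVec, dotProduct]
      exact Finset.sum_nonneg fun j _ => mul_nonneg (hPmpos (k+1) i j) (hstarpos j)
    have hqn : ‖q‖ ≤ ‖pstar‖ := hPm (k+1) pstar
    have hw : ‖pstar - q‖ ≤ ‖pstar‖ := by
      rw [pi_norm_le_iff_of_nonneg (norm_nonneg _)]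
      intro i
      have hpi : pstar i ≤ ‖pstar‖ := le_trans (le_abs_self _)
        (by simpa using norm_le_pi_norm pstar i)
      have hqi : q i ≤ ‖pstar‖ := le_trans (le_trans (le_abs_self _)
        (by simpa using norm_le_pi_norm q i)) hqn
      rw [Pi.sub_apply, Real.norm_eq_abs, abs_sub_le_iff]
      constructor
      · linarith [hqpos i]
      · linarith [hstarpos i]
    have hA0 : 0 ≤ β^(k+1) / (1 - β^(k+1)) := div_nonneg (pow_nonneg hβ0 _) hd.le
    have hA : β^(k+1) / (1 - β^(k+1)) ≤ γ * β^k := by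
      have h2 : β^(k+1) ≤ β := by
        calc β^(k+1) ≤ β^1 := pow_le_pow_of_le_one hβ0 hβ1.le (by omega)
          _ = β := pow_one β
      have hβγ : β / (1 - β) = γ := by
        rw [h1β, hβ]
        field_simp
      have h3 : β^(k+1) / (1 - β) = γ * β^k := by
        rw [pow_succ, mul_div_assoc, hβγ]
        ring
      calc β^(k+1) / (1 - β^(k+1)) ≤ β^(k+1) / (1 - β) := by
            apply div_le_div_of_nonneg_left (pow_nonneg hβ0 _) (by linarith) (by linarith)
        _ = γ * β^k := h3
    rw [hkey k, norm_smul, Real.norm_eq_abs, abs_of_nonneg hA0]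
    have hc1 : 0 ≤ ‖(1 / (1 + γ)) • p₀ - pstar‖ := norm_nonneg _
    have hβk : 0 ≤ β^k := pow_nonneg hβ0 k
    nlinarith [norm_nonneg pstar, norm_nonneg (pstar - q), mul_le_mul hA hw (norm_nonneg _) (by positivity)]
  refine ⟨hbound, ?_⟩
  rw [tendsto_iff_norm_sub_tendsto_zero]
  apply squeeze_zero (fun k => norm_nonneg _) hbound
  have := (tendsto_pow_atTop_nhds_zero_of_lt_one hβ0 hβ1).const_mul
    (‖(1 / (1 + γ)) • p₀ - pstar‖ + γ * ‖pstar‖)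
  simpa using this
end

section
/- For γ > 0 and k ∈ ℕ, the difference between the scaled iterate p^{(k)} = α_k S_k and the unnormalized iterate p̃^{(k)} = α S_k (with S_k = ∑_{m=0}^k (γ/(1+γ))^m P^m p₀, α_k = (1+γ)^k/((1+γ)^{k+1} - γ^{k+1}), α = 1/(1+γ)) satisfies ‖p^{(k)} - p̃^{(k)}‖ ≤ (γ/(1+γ))^{k+1} ‖S_k‖, and if ‖P^m p₀‖ ≤ ‖p₀‖ for all m then ‖S_k‖ ≤ (1+γ)‖p₀‖, hence ‖p^{(k)} - p̃^{(k)}‖ ≤ γ (γ/(1+γ))^k ‖p₀‖. -/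
theorem stmt_13 {n : ℕ} (γ : ℝ) (hγ : 0 < γ) (k : ℕ) (P : Matrix (Fin n) (Fin n) ℝ)
    (p₀ : Fin n → ℝ)
    (S : Fin n → ℝ)
    (hS : S = ∑ m ∈ Finset.range (k + 1), (γ / (1 + γ)) ^ m • (P ^ m).mulVec p₀) :
    ‖((1 + γ) ^ k / ((1 + γ) ^ (k + 1) - γ ^ (k + 1))) • S - (1 / (1 + γ)) • S‖ ≤
        (γ / (1 + γ)) ^ (k + 1) * ‖S‖ ∧
    ((∀ m : ℕ, ‖(P ^ m).mulVec p₀‖ ≤ ‖p₀‖) →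
      ‖S‖ ≤ (1 + γ) * ‖p₀‖ ∧
      ‖((1 + γ) ^ k / ((1 + γ) ^ (k + 1) - γ ^ (k + 1))) • S - (1 / (1 + γ)) • S‖ ≤
          γ * (γ / (1 + γ)) ^ k * ‖p₀‖) := by
  have ha : (0:ℝ) < 1 + γ := by linarith
  have hγa : γ < 1 + γ := by linarith
  have hDpos : (0:ℝ) < (1 + γ) ^ (k + 1) - γ ^ (k + 1) :=
    sub_pos.mpr (pow_lt_pow_left₀ hγa hγ.le (Nat.succ_ne_zero k))
  have hDge : (1 + γ) ^ k ≤ (1 + γ) ^ (k + 1) - γ ^ (k + 1) := by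
    have h1 : γ ^ (k + 1) ≤ γ * (1 + γ) ^ k := by
      have := pow_le_pow_left₀ hγ.le hγa.le k
      calc γ ^ (k+1) = γ * γ ^ k := by ring
        _ ≤ γ * (1 + γ) ^ k := by nlinarith
    have : (1 + γ) ^ (k + 1) = (1 + γ) ^ k + γ * (1 + γ) ^ k := by ring
    linarith
  -- coefficient difference
  have hcoef : (1 + γ) ^ k / ((1 + γ) ^ (k + 1) - γ ^ (k + 1)) - 1 / (1 + γ)
      = γ ^ (k + 1) / (((1 + γ) ^ (k + 1) - γ ^ (k + 1)) * (1 + γ)) := by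
    field_simp
    ring
  have hcoefle : (1 + γ) ^ k / ((1 + γ) ^ (k + 1) - γ ^ (k + 1)) - 1 / (1 + γ)
      ≤ (γ / (1 + γ)) ^ (k + 1) := by
    rw [hcoef, div_pow]
    have h1 : (1 + γ) ^ (k + 1) ≤ (((1 + γ) ^ (k + 1) - γ ^ (k + 1)) * (1 + γ)) := by
      have : (1 + γ) ^ (k + 1) = (1 + γ) ^ k * (1 + γ) := by ring
      rw [this]
      exact mul_le_mul_of_nonneg_right hDge ha.le
    exact div_le_div_of_nonneg_left (by positivity) (by positivity) h1
  have hcoefpos : 0 ≤ (1 + γ) ^ k / ((1 + γ) ^ (k + 1) - γ ^ (k + 1)) - 1 / (1 + γ) := by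
    rw [hcoef]; positivity
  have hmain : ‖((1 + γ) ^ k / ((1 + γ) ^ (k + 1) - γ ^ (k + 1))) • S - (1 / (1 + γ)) • S‖ ≤
      (γ / (1 + γ)) ^ (k + 1) * ‖S‖ := by
    rw [← sub_smul, norm_smul, Real.norm_eq_abs, abs_of_nonneg hcoefpos]
    exact mul_le_mul_of_nonneg_right hcoefle (norm_nonneg _)
  refine ⟨hmain, fun hP => ?_⟩
  have hr0 : (0:ℝ) ≤ γ / (1 + γ) := by positivity
  have hr1 : γ / (1 + γ) < 1 := by rw [div_lt_one ha]; linarith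
  have hSle : ‖S‖ ≤ (1 + γ) * ‖p₀‖ := by
    rw [hS]
    calc ‖∑ m ∈ Finset.range (k + 1), (γ / (1 + γ)) ^ m • (P ^ m).mulVec p₀‖
        ≤ ∑ m ∈ Finset.range (k + 1), ‖(γ / (1 + γ)) ^ m • (P ^ m).mulVec p₀‖ :=
          norm_sum_le _ _
      _ ≤ ∑ m ∈ Finset.range (k + 1), (γ / (1 + γ)) ^ m * ‖p₀‖ := by
          refine Finset.sum_le_sum fun m _ => ?_
          rw [norm_smul, Real.norm_eq_abs, abs_of_nonneg (by positivity)]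
          exact mul_le_mul_of_nonneg_left (hP m) (by positivity)
      _ = (∑ m ∈ Finset.range (k + 1), (γ / (1 + γ)) ^ m) * ‖p₀‖ := by
          rw [Finset.sum_mul]
      _ ≤ (1 + γ) * ‖p₀‖ := by
          refine mul_le_mul_of_nonneg_right ?_ (norm_nonneg _)
          rw [geom_sum_eq (by linarith : γ / (1 + γ) ≠ 1),
            div_le_iff_of_neg (by linarith : γ / (1 + γ) - 1 < 0)]
          have hc : γ / (1 + γ) * (1 + γ) = γ := div_mul_cancel₀ γ (ne_of_gt ha)
          nlinarith [pow_nonneg hr0 (k + 1)]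
  refine ⟨hSle, ?_⟩
  calc ‖((1 + γ) ^ k / ((1 + γ) ^ (k + 1) - γ ^ (k + 1))) • S - (1 / (1 + γ)) • S‖
      ≤ (γ / (1 + γ)) ^ (k + 1) * ‖S‖ := hmain
    _ ≤ (γ / (1 + γ)) ^ (k + 1) * ((1 + γ) * ‖p₀‖) :=
        mul_le_mul_of_nonneg_left hSle (by positivity)
    _ = γ * (γ / (1 + γ)) ^ k * ‖p₀‖ := by
        rw [pow_succ, div_pow]
        field_simp
end
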